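/- Let Ω be a p×p symmetric positive definite matrix with eigenvalues λ₁ ≥ ⋯ ≥ λ_p and g(x) = x⁴ − 2x³. Then max over unit vectors z of ‖Ω² z zᵀ − Ω‖_F² equals Σᵢ λᵢ² + max(g(λ₁), g(λ_p)), and the maximum is attained at the eigenvector v₁ if g(λ₁) ≥ g(λ_p), and at v_p otherwise. -/

import Mathlib

open Matrix Finset

/-!
Let `V` be the orthogonal matrix whose rows are the eigenvectors, so that `V Ω Vᵀ = diag λ`.
Conjugation by `V` preserves the sum of squared entries and turns `Ω² z zᵀ − Ω` into
`diag(λ²) c cᵀ − diag λ` with `c = V z` a unit vector; expanding,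
`‖Ω² z zᵀ − Ω‖_F² = ∑ λᵢ² + ∑ cᵢ² g(λᵢ)`, i.e. `∑ λᵢ²` plus a convex combination of
the `g(λᵢ)`.
Since `g' x = 2x²(2x − 3)`, `g` decreases up to `3/2` and increases after it, so on
`[λ_p, λ₁]` it is bounded by `max (g λ₁) (g λ_p)`, and `c` a standard basis vector
(`z = v₁` or `z = v_p`) attains this bound.
-/

section
variable {l m R : Type*} [Fintype l] [Fintype m] [CommSemiring R]

lemma sum_sum_sq_eq_trace_mul_transpose (A : Matrix l m R) :
    ∑ i, ∑ j, A i j ^ 2 = trace (A * Aᵀ) := by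
  simp only [trace, Matrix.diag, mul_apply, transpose_apply, sq]

lemma sum_sum_sq_conj_of_transpose_mul_self [DecidableEq m] {V : Matrix l m R}
    (hV : Vᵀ * V = 1) (A : Matrix m m R) :
    ∑ i, ∑ j, (V * A * Vᵀ) i j ^ 2 = ∑ i, ∑ j, A i j ^ 2 := by
  rw [sum_sum_sq_eq_trace_mul_transpose, sum_sum_sq_eq_trace_mul_transpose]
  calc trace (V * A * Vᵀ * (V * A * Vᵀ)ᵀ) = trace (V * (A * Aᵀ) * Vᵀ) := by
        simp only [transpose_mul, transpose_transpose, Matrix.mul_assoc]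
        rw [← Matrix.mul_assoc Vᵀ V, hV, Matrix.one_mul]
    _ = trace (A * Aᵀ) := by
        rw [trace_mul_comm, ← Matrix.mul_assoc, hV, Matrix.one_mul]

lemma dotProduct_mulVec_self_of_transpose_mul_self [DecidableEq m] {V : Matrix l m R}
    (hV : Vᵀ * V = 1) (z : m → R) : V *ᵥ z ⬝ᵥ V *ᵥ z = z ⬝ᵥ z := by
  rw [dotProduct_mulVec, ← vecMul_transpose, vecMul_vecMul, hV, vecMul_one]

end

section
variable {m R : Type*} [Fintype m] [DecidableEq m] [CommRing R]

lemma of_mul_transpose_eq_one {v : m → m → R}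
    (horth : ∀ i j, v i ⬝ᵥ v j = if i = j then 1 else 0) : of v * (of v)ᵀ = 1 := by
  ext i j
  simpa [mul_apply, one_apply, dotProduct] using horth i j

lemma mulVec_row_of_mul_transpose_eq_one {V : Matrix m m R} (hV : V * Vᵀ = 1) (j : m) :
    V *ᵥ V j = Pi.single j 1 := by
  ext k
  simpa [mul_apply, mulVec, dotProduct, one_apply, Pi.single_apply] using congrFun (congrFun hV k) j

lemma conj_eq_diagonal_of_mulVec_eq_smul {Ω V : Matrix m m R} {lam : m → R}
    (hV : V * Vᵀ = 1) (heig : ∀ i, Ω *ᵥ V i = lam i • V i) :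
    V * Ω * Vᵀ = diagonal lam := by
  have hcols : Ω * Vᵀ = Vᵀ * diagonal lam := by
    ext i j
    rw [mul_diagonal, transpose_apply, mul_comm]
    simpa [mul_apply, mulVec, dotProduct] using congrFun (heig j) i
  rw [Matrix.mul_assoc, hcols, ← Matrix.mul_assoc, hV, Matrix.one_mul]

lemma sum_sum_sq_diagonal_sq_mul_vecMulVec_sub_diagonal (lam c : m → R) (hc : c ⬝ᵥ c = 1) :
    ∑ i, ∑ j, ((diagonal (lam ^ 2) * vecMulVec c c - diagonal lam : Matrix m m R) i j) ^ 2 =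
      ∑ i, lam i ^ 2 + ∑ i, c i ^ 2 * (lam i ^ 4 - 2 * lam i ^ 3) := by
  have hc' : ∑ j, c j ^ 2 = 1 := by simpa [dotProduct, sq] using hc
  have entry : ∀ i j,
      ((diagonal (lam ^ 2) * vecMulVec c c - diagonal lam : Matrix m m R) i j) ^ 2 =
        lam i ^ 4 * c i ^ 2 * c j ^ 2 +
          if i = j then lam i ^ 2 - 2 * lam i ^ 3 * c i ^ 2 else 0 := by
    intro i j
    simp only [Matrix.sub_apply, diagonal_mul, vecMulVec_apply, diagonal_apply, Pi.pow_apply]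
    split_ifs with h
    · subst h; ring
    · ring
  have row : ∀ i,
      ∑ j, ((diagonal (lam ^ 2) * vecMulVec c c - diagonal lam : Matrix m m R) i j) ^ 2 =
        lam i ^ 2 + c i ^ 2 * (lam i ^ 4 - 2 * lam i ^ 3) := by
    intro i
    rw [sum_congr rfl fun j _ => entry i j, sum_add_distrib, ← mul_sum, hc', sum_ite_eq,
      if_pos (mem_univ i)]
    ring
  rw [sum_congr rfl fun i _ => row i, sum_add_distrib]

lemma sum_sum_sq_sq_mul_vecMulVec_sub_of_conj_eq_diagonal {Ω V : Matrix m m R} {lam : m → R}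
    (hV : Vᵀ * V = 1) (hconj : V * Ω * Vᵀ = diagonal lam) (z : m → R) (hz : z ⬝ᵥ z = 1) :
    ∑ i, ∑ j, ((Ω ^ 2 * vecMulVec z z - Ω) i j) ^ 2 =
      ∑ i, lam i ^ 2 + ∑ i, (V *ᵥ z) i ^ 2 * (lam i ^ 4 - 2 * lam i ^ 3) := by
  have hsq : V * Ω ^ 2 * Vᵀ = diagonal (lam ^ 2) := by
    rw [← diagonal_pow, ← hconj, sq, sq]
    simp only [Matrix.mul_assoc]
    rw [← Matrix.mul_assoc Vᵀ V, hV, Matrix.one_mul]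
  have hrank1 : vecMulVec (V *ᵥ z) (V *ᵥ z) = V * vecMulVec z z * Vᵀ := by
    rw [mul_vecMulVec, vecMulVec_mul, vecMul_transpose]
  have hconj' : V * (Ω ^ 2 * vecMulVec z z - Ω) * Vᵀ =
      diagonal (lam ^ 2) * vecMulVec (V *ᵥ z) (V *ᵥ z) - diagonal lam := by
    rw [Matrix.mul_sub, Matrix.sub_mul, hconj, ← hsq, hrank1]
    simp only [Matrix.mul_assoc]
    rw [← Matrix.mul_assoc Vᵀ V, hV, Matrix.one_mul]
  rw [← sum_sum_sq_conj_of_transpose_mul_self hV, hconj',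
    sum_sum_sq_diagonal_sq_mul_vecMulVec_sub_diagonal]
  rwa [dotProduct_mulVec_self_of_transpose_mul_self hV]

end

lemma sum_mul_le_of_sum_eq_one {ι : Type*} [Fintype ι] {w f : ι → ℝ} {M : ℝ}
    (hw : ∀ i, 0 ≤ w i) (hsum : ∑ i, w i = 1) (hf : ∀ i, f i ≤ M) :
    ∑ i, w i * f i ≤ M :=
  calc ∑ i, w i * f i ≤ ∑ i, w i * M :=
        sum_le_sum fun i _ => mul_le_mul_of_nonneg_left (hf i) (hw i)
    _ = M := by rw [← sum_mul, hsum, one_mul]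

section
open Set

lemma deriv_quartic (x : ℝ) :
    deriv (fun x : ℝ => x ^ 4 - 2 * x ^ 3) x = 2 * x ^ 2 * (2 * x - 3) := by
  have h : HasDerivAt (fun x : ℝ => x ^ 4 - 2 * x ^ 3) (4 * x ^ 3 - 2 * (3 * x ^ 2)) x := by
    exact_mod_cast ((hasDerivAt_pow 4 x).sub ((hasDerivAt_pow 3 x).const_mul 2) :)
  rw [h.deriv]
  ring

lemma antitoneOn_quartic : AntitoneOn (fun x : ℝ => x ^ 4 - 2 * x ^ 3) (Iic (3 / 2)) := by
  refine antitoneOn_of_deriv_nonpos (convex_Iic _) (by fun_prop) (by fun_prop) fun x hx => ?_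
  rw [interior_Iic, Set.mem_Iio] at hx
  rw [deriv_quartic]
  exact mul_nonpos_of_nonneg_of_nonpos (by positivity) (by linarith)

lemma monotoneOn_quartic : MonotoneOn (fun x : ℝ => x ^ 4 - 2 * x ^ 3) (Ici (3 / 2)) := by
  refine monotoneOn_of_deriv_nonneg (convex_Ici _) (by fun_prop) (by fun_prop) fun x hx => ?_
  rw [interior_Ici, Set.mem_Ioi] at hx
  rw [deriv_quartic]
  exact mul_nonneg (by positivity) (by linarith)

lemma quartic_le_max_of_le_of_le {a b x : ℝ} (hax : a ≤ x) (hxb : x ≤ b) :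
    x ^ 4 - 2 * x ^ 3 ≤ max (a ^ 4 - 2 * a ^ 3) (b ^ 4 - 2 * b ^ 3) := by
  rcases le_total x (3 / 2) with hx | hx
  · exact le_max_of_le_left (antitoneOn_quartic (hax.trans hx) hx hax)
  · exact le_max_of_le_right (monotoneOn_quartic hx (hx.trans hxb) hxb)

end

theorem max_frobenius_sq_IF_general {n : ℕ} (Ω : Matrix (Fin (n + 1)) (Fin (n + 1)) ℝ)
    (lam : Fin (n + 1) → ℝ) (hdec : Antitone lam)
    (v : Fin (n + 1) → Fin (n + 1) → ℝ)
    (horth : ∀ i j, v i ⬝ᵥ v j = if i = j then (1 : ℝ) else 0)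
    (heig : ∀ i, Ω.mulVec (v i) = lam i • v i)
    (g : ℝ → ℝ) (hg : ∀ x, g x = x ^ 4 - 2 * x ^ 3) :
    IsGreatest
      {c : ℝ | ∃ z : Fin (n + 1) → ℝ, z ⬝ᵥ z = 1 ∧
        c = ∑ i, ∑ j, ((Ω ^ 2 * vecMulVec z z - Ω) i j) ^ 2}
      ((∑ i, lam i ^ 2) + max (g (lam 0)) (g (lam (Fin.last n)))) ∧
    (g (lam 0) ≥ g (lam (Fin.last n)) →
      (∑ i, ∑ j, ((Ω ^ 2 * vecMulVec (v 0) (v 0) - Ω) i j) ^ 2) =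
        (∑ i, lam i ^ 2) + max (g (lam 0)) (g (lam (Fin.last n)))) ∧
    (g (lam 0) < g (lam (Fin.last n)) →
      (∑ i, ∑ j, ((Ω ^ 2 * vecMulVec (v (Fin.last n)) (v (Fin.last n)) - Ω) i j) ^ 2) =
        (∑ i, lam i ^ 2) + max (g (lam 0)) (g (lam (Fin.last n)))) := by
  set V : Matrix (Fin (n + 1)) (Fin (n + 1)) ℝ := of v
  have hVVt : V * Vᵀ = 1 := of_mul_transpose_eq_one horth
  have hV : Vᵀ * V = 1 := mul_eq_one_comm.mp hVVt
  have hunit : ∀ j, v j ⬝ᵥ v j = 1 := fun j => by simpa using horth j j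
  have hF : ∀ z, z ⬝ᵥ z = 1 → ∑ i, ∑ j, ((Ω ^ 2 * vecMulVec z z - Ω) i j) ^ 2 =
      ∑ i, lam i ^ 2 + ∑ k, (V *ᵥ z) k ^ 2 * g (lam k) := fun z hz => by
    simpa only [hg] using sum_sum_sq_sq_mul_vecMulVec_sub_of_conj_eq_diagonal hV
      (conj_eq_diagonal_of_mulVec_eq_smul hVVt heig) z hz
  have hFv : ∀ j, ∑ i, ∑ k, ((Ω ^ 2 * vecMulVec (v j) (v j) - Ω) i k) ^ 2 =
      ∑ i, lam i ^ 2 + g (lam j) := fun j => by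
    have hcoord : V *ᵥ v j = Pi.single j 1 := mulVec_row_of_mul_transpose_eq_one hVVt j
    rw [hF _ (hunit j), hcoord]
    simp [Pi.single_apply]
  have hgM : ∀ k, g (lam k) ≤ max (g (lam 0)) (g (lam (Fin.last n))) := fun k => by
    simp only [hg, max_comm (lam 0 ^ 4 - _)]
    exact quartic_le_max_of_le_of_le (hdec (Fin.le_last k)) (hdec (Fin.zero_le k))
  refine ⟨⟨?_, ?_⟩, fun hc => by rw [hFv, max_eq_left hc],
    fun hc => by rw [hFv, max_eq_right hc.le]⟩
  · rcases le_total (g (lam (Fin.last n))) (g (lam 0)) with hc | hc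
    · exact ⟨v 0, hunit 0, by rw [hFv, max_eq_left hc]⟩
    · exact ⟨v (Fin.last n), hunit _, by rw [hFv, max_eq_right hc]⟩
  · rintro _ ⟨z, hz, rfl⟩
    rw [hF z hz]
    gcongr
    refine sum_mul_le_of_sum_eq_one (fun k => sq_nonneg _) ?_ hgM
    rw [← hz, ← dotProduct_mulVec_self_of_transpose_mul_self hV z]
    simp only [dotProduct, sq]

/-- For symmetric positive definite `Ω` with decreasing eigenvalues `lam` and
orthonormal eigenvectors `v`, and `g x = x⁴ − 2x³`, the maximum over unit
vectors `z` of `‖Ω² z zᵀ − Ω‖_F²` is `∑ i, lam i ^ 2 + max (g lam₁) (g lam_p)`,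
attained at `v 0` if `g lam₁ ≥ g lam_p` and at `v (Fin.last n)` otherwise. -/
theorem max_frobenius_sq_IF {n : ℕ} (Ω : Matrix (Fin (n + 1)) (Fin (n + 1)) ℝ)
    (hΩ : Ω.PosDef) (lam : Fin (n + 1) → ℝ) (hdec : Antitone lam)
    (v : Fin (n + 1) → Fin (n + 1) → ℝ)
    (horth : ∀ i j, v i ⬝ᵥ v j = if i = j then (1 : ℝ) else 0)
    (heig : ∀ i, Ω.mulVec (v i) = lam i • v i)
    (g : ℝ → ℝ) (hg : ∀ x, g x = x ^ 4 - 2 * x ^ 3) :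
    IsGreatest
      {c : ℝ | ∃ z : Fin (n + 1) → ℝ, z ⬝ᵥ z = 1 ∧
        c = ∑ i, ∑ j, ((Ω ^ 2 * vecMulVec z z - Ω) i j) ^ 2}
      ((∑ i, lam i ^ 2) + max (g (lam 0)) (g (lam (Fin.last n)))) ∧
    (g (lam 0) ≥ g (lam (Fin.last n)) →
      (∑ i, ∑ j, ((Ω ^ 2 * vecMulVec (v 0) (v 0) - Ω) i j) ^ 2) =
        (∑ i, lam i ^ 2) + max (g (lam 0)) (g (lam (Fin.last n)))) ∧
    (g (lam 0) < g (lam (Fin.last n)) →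
      (∑ i, ∑ j, ((Ω ^ 2 * vecMulVec (v (Fin.last n)) (v (Fin.last n)) - Ω) i j) ^ 2) =
        (∑ i, lam i ^ 2) + max (g (lam 0)) (g (lam (Fin.last n)))) :=
  max_frobenius_sq_IF_general Ω lam hdec v horth heig g hg
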